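/- Let G be a finite set of nonzero polynomials generating an ideal I, and suppose that for every pair g, h ∈ G, the S-polynomial S(g,h) reduces to zero modulo G. Then G is a Gröbner basis of I. -/

import Mathlib

open MvPolynomial
open scoped MonomialOrder

/-- The leading monomial (exponent vector) of a polynomial w.r.t. a monomial order. -/
noncomputable def lmon {σ F : Type*} [Field F] (m : MonomialOrder σ)
    (f : MvPolynomial σ F) : σ →₀ ℕ :=
  m.toSyn.symm (f.support.sup fun d => m.toSyn d)

/-- `(t·e_i, p)` is an admissible labelled polynomial w.r.t. `f_0,…,f_{M-1}`. -/
def Admissible {σ F : Type*} [Field F] (m : MonomialOrder σ) {M : ℕ}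
    (Fs : Fin M → MvPolynomial σ F) (t : σ →₀ ℕ) (i : Fin M)
    (p : MvPolynomial σ F) : Prop :=
  ∃ h : Fin M → MvPolynomial σ F,
    p = ∑ k, h k * Fs k ∧ (∀ k, i < k → h k = 0) ∧ h i ≠ 0 ∧ lmon m (h i) = t

/-- The strict ordering on signatures: by index first, then by the monomial order. -/
def SigLt {σ : Type*} (m : MonomialOrder σ) {M : ℕ}
    (a b : (σ →₀ ℕ) × Fin M) : Prop :=
  a.2 < b.2 ∨ (a.2 = b.2 ∧ m.toSyn a.1 < m.toSyn b.1)

/-- One step of multivariate division (reduction) of `f` by an element of `G`. -/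
def RedStep {σ F : Type*} [Field F] (m : MonomialOrder σ)
    (G : Set (MvPolynomial σ F)) (f f' : MvPolynomial σ F) : Prop :=
  ∃ g ∈ G, g ≠ 0 ∧ ∃ d ∈ f.support, lmon m g ≤ d ∧
    f' = f - monomial (d - lmon m g) (f.coeff d / g.coeff (lmon m g)) * g

/-- `f` reduces to zero modulo `G` (multivariate division yields remainder 0). -/
def ReducesToZero {σ F : Type*} [Field F] (m : MonomialOrder σ)
    (G : Set (MvPolynomial σ F)) (f : MvPolynomial σ F) : Prop :=
  Relation.ReflTransGen (RedStep m G) f 0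

/-- The S-polynomial of `f` and `g`. -/
noncomputable def SPoly {σ F : Type*} [Field F] (m : MonomialOrder σ)
    (f g : MvPolynomial σ F) : MvPolynomial σ F :=
  monomial (lmon m f ⊔ lmon m g - lmon m f) (f.coeff (lmon m f))⁻¹ * f -
    monomial (lmon m f ⊔ lmon m g - lmon m g) (g.coeff (lmon m g))⁻¹ * g

/-- `G` is a Gröbner basis of `I`: `G ⊆ I` and the leading monomial of every
nonzero element of `I` is divisible by the leading monomial of some element of `G`. -/
def IsGroebner {σ F : Type*} [Field F] (m : MonomialOrder σ)
    (G : Set (MvPolynomial σ F)) (I : Ideal (MvPolynomial σ F)) : Prop :=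
  (∀ g ∈ G, g ∈ I) ∧ ∀ f ∈ I, f ≠ 0 → ∃ g ∈ G, g ≠ 0 ∧ lmon m g ≤ lmon m f

section Lemmas
variable {σ F : Type*} [Field F] {m : MonomialOrder σ}

/-- degree in the synonym type -/
noncomputable def mdeg (m : MonomialOrder σ) (f : MvPolynomial σ F) : m.syn :=
  f.support.sup fun d => m.toSyn d

lemma toSyn_lmon (f : MvPolynomial σ F) : m.toSyn (lmon m f) = mdeg m f :=
  m.toSyn.apply_symm_apply _

lemma mdeg_zero : mdeg m (0 : MvPolynomial σ F) = 0 := by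
  simp [mdeg]

lemma le_mdeg {d : σ →₀ ℕ} {f : MvPolynomial σ F} (hd : d ∈ f.support) :
    m.toSyn d ≤ mdeg m f := Finset.le_sup hd

lemma le_mdeg' {d : σ →₀ ℕ} {f : MvPolynomial σ F} (hd : f.coeff d ≠ 0) :
    m.toSyn d ≤ mdeg m f := le_mdeg (mem_support_iff.2 hd)

lemma coeff_eq_zero_of_mdeg_lt {d : σ →₀ ℕ} {f : MvPolynomial σ F}
    (h : mdeg m f < m.toSyn d) : f.coeff d = 0 := by
  by_contra hc
  exact absurd (le_mdeg' hc) (not_le.2 h)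

lemma lmon_mem_support {f : MvPolynomial σ F} (hf : f ≠ 0) : lmon m f ∈ f.support := by
  obtain ⟨d, hd, hsup⟩ := f.support.exists_mem_eq_sup
    (Finset.nonempty_iff_ne_empty.2 (fun h => hf (support_eq_empty.1 h))) (fun d => m.toSyn d)
  have : lmon m f = d := by simp [lmon, hsup]
  rwa [this]

lemma coeff_lmon {f : MvPolynomial σ F} (hf : f ≠ 0) : f.coeff (lmon m f) ≠ 0 :=
  mem_support_iff.1 (lmon_mem_support hf)

lemma eq_lmon {d : σ →₀ ℕ} {f : MvPolynomial σ F} (hd : d ∈ f.support)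
    (h : mdeg m f ≤ m.toSyn d) : d = lmon m f := by
  have h2 : m.toSyn d = mdeg m f := le_antisymm (le_mdeg hd) h
  have := congrArg m.toSyn.symm h2
  rwa [AddEquiv.symm_apply_apply] at this

lemma mdeg_le_iff {f : MvPolynomial σ F} {δ : m.syn} :
    mdeg m f ≤ δ ↔ ∀ d ∈ f.support, m.toSyn d ≤ δ := Finset.sup_le_iff

lemma mdeg_add_le {f g : MvPolynomial σ F} :
    mdeg m (f + g) ≤ max (mdeg m f) (mdeg m g) := by
  rw [mdeg_le_iff]
  intro d hd
  rw [mem_support_iff, coeff_add] at hd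
  rcases (by by_contra hc; push_neg at hc; simp [hc.1, hc.2] at hd :
      f.coeff d ≠ 0 ∨ g.coeff d ≠ 0) with h | h
  · exact le_trans (le_mdeg' h) (le_max_left _ _)
  · exact le_trans (le_mdeg' h) (le_max_right _ _)

lemma exists_of_coeff_mul_ne_zero {f g : MvPolynomial σ F} {d : σ →₀ ℕ}
    (hd : (f * g).coeff d ≠ 0) :
    ∃ a b, a + b = d ∧ f.coeff a ≠ 0 ∧ g.coeff b ≠ 0 := by
  classical
  rw [coeff_mul] at hd
  obtain ⟨p, hp, hne⟩ := Finset.exists_ne_zero_of_sum_ne_zero hd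
  exact ⟨p.1, p.2, Finset.HasAntidiagonal.mem_antidiagonal.1 hp,
    fun h => hne (by simp [h]), fun h => hne (by simp [h])⟩

lemma mdeg_mul_le {f g : MvPolynomial σ F} :
    mdeg m (f * g) ≤ mdeg m f + mdeg m g := by
  rw [mdeg_le_iff]
  intro d hd
  obtain ⟨a, b, hab, ha, hb⟩ := exists_of_coeff_mul_ne_zero (mem_support_iff.1 hd)
  rw [← hab, map_add]
  exact add_le_add (le_mdeg' ha) (le_mdeg' hb)

lemma coeff_mul_lmon {f g : MvPolynomial σ F} (hf : f ≠ 0) (hg : g ≠ 0) :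
    (f * g).coeff (lmon m f + lmon m g) = f.coeff (lmon m f) * g.coeff (lmon m g) := by
  classical
  rw [coeff_mul]
  rw [Finset.sum_eq_single (lmon m f, lmon m g)]
  · intro p hp hne
    rw [Finset.HasAntidiagonal.mem_antidiagonal] at hp
    by_contra hc
    have h1 : f.coeff p.1 ≠ 0 := fun h => hc (by rw [h, zero_mul])
    have h2 : g.coeff p.2 ≠ 0 := fun h => hc (by rw [h, mul_zero])
    have e1 : m.toSyn p.1 ≤ m.toSyn (lmon m f) := by
      rw [toSyn_lmon]; exact le_mdeg' h1
    have e2 : m.toSyn p.2 ≤ m.toSyn (lmon m g) := by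
      rw [toSyn_lmon]; exact le_mdeg' h2
    have hsum : m.toSyn p.1 + m.toSyn p.2 = m.toSyn (lmon m f) + m.toSyn (lmon m g) := by
      rw [← map_add, ← map_add, hp]
    have q1 : m.toSyn p.1 = m.toSyn (lmon m f) := by
      rcases lt_or_eq_of_le e1 with hlt | he
      · exfalso
        exact absurd hsum (ne_of_lt (add_lt_add_of_lt_of_le hlt e2))
      · exact he
    have q2 : m.toSyn p.2 = m.toSyn (lmon m g) := by
      have h3 := hsum; rw [q1] at h3; exact add_left_cancel h3
    exact hne (Prod.ext (m.toSyn.injective q1) (m.toSyn.injective q2))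
  · intro h
    refine absurd ?_ h
    rw [Finset.HasAntidiagonal.mem_antidiagonal]

lemma lmon_mul {f g : MvPolynomial σ F} (hf : f ≠ 0) (hg : g ≠ 0) :
    lmon m (f * g) = lmon m f + lmon m g := by
  have hmem : lmon m f + lmon m g ∈ (f * g).support := by
    rw [mem_support_iff, coeff_mul_lmon hf hg]
    exact mul_ne_zero (coeff_lmon hf) (coeff_lmon hg)
  refine (eq_lmon hmem ?_).symm
  rw [map_add, toSyn_lmon, toSyn_lmon]
  exact mdeg_mul_le

lemma mdeg_mul {f g : MvPolynomial σ F} (hf : f ≠ 0) (hg : g ≠ 0) :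
    mdeg m (f * g) = mdeg m f + mdeg m g := by
  rw [← toSyn_lmon, lmon_mul hf hg, map_add, toSyn_lmon, toSyn_lmon]

lemma mdeg_monomial_le {t : σ →₀ ℕ} {c : F} :
    mdeg m (monomial t c : MvPolynomial σ F) ≤ m.toSyn t := by
  classical
  rw [mdeg_le_iff]
  intro d hd
  rw [mem_support_iff, coeff_monomial] at hd
  rcases eq_or_ne t d with h | h
  · rw [h]
  · rw [if_neg h] at hd
    exact absurd rfl hd

lemma lmon_monomial {t : σ →₀ ℕ} {c : F} (hc : c ≠ 0) :
    lmon m (monomial t c : MvPolynomial σ F) = t := by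
  classical
  have hs : (monomial t c : MvPolynomial σ F).support = {t} := by
    rw [support_monomial, if_neg hc]
  simp [lmon, hs]

end Lemmas
section Chunk2
variable {σ F : Type*} [Field F] {m : MonomialOrder σ}

lemma mdeg_neg {f : MvPolynomial σ F} : mdeg m (-f) = mdeg m f := by
  unfold mdeg; rw [MvPolynomial.support_neg]

lemma mdeg_sub_le {f g : MvPolynomial σ F} :
    mdeg m (f - g) ≤ max (mdeg m f) (mdeg m g) := by
  rw [sub_eq_add_neg]
  exact le_trans mdeg_add_le (by rw [mdeg_neg])

lemma exists_of_coeff_monomial_mul_ne_zero {u : σ →₀ ℕ} {c : F} {p : MvPolynomial σ F}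
    {d : σ →₀ ℕ} (h : (monomial u c * p).coeff d ≠ 0) :
    ∃ b, p.coeff b ≠ 0 ∧ d = u + b := by
  classical
  obtain ⟨a, b, hab, ha, hb⟩ := exists_of_coeff_mul_ne_zero h
  rw [coeff_monomial] at ha
  by_cases hua : u = a
  · exact ⟨b, hb, by rw [← hab, hua]⟩
  · rw [if_neg hua] at ha; exact absurd rfl ha

lemma spoly_support {g1 g2 : MvPolynomial σ F} (h1 : g1 ≠ 0) (h2 : g2 ≠ 0)
    {d : σ →₀ ℕ} (hd : d ∈ (SPoly m g1 g2).support) :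
    m.toSyn d < m.toSyn (lmon m g1 ⊔ lmon m g2) := by
  set l1 := lmon m g1
  set l2 := lmon m g2
  set γ := l1 ⊔ l2 with hγ
  have hl1 : l1 ≤ γ := le_sup_left
  have hl2 : l2 ≤ γ := le_sup_right
  set A := monomial (γ - l1) (g1.coeff l1)⁻¹ * g1 with hA
  set B := monomial (γ - l2) (g2.coeff l2)⁻¹ * g2 with hB
  have hS : SPoly m g1 g2 = A - B := rfl
  -- coefficient at γ vanishes
  have hcA : A.coeff γ = 1 := by
    rw [← tsub_add_cancel_of_le hl1, hA, MvPolynomial.coeff_monomial_mul]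
    exact inv_mul_cancel₀ (coeff_lmon h1)
  have hcB : B.coeff γ = 1 := by
    rw [← tsub_add_cancel_of_le hl2, hB, MvPolynomial.coeff_monomial_mul]
    exact inv_mul_cancel₀ (coeff_lmon h2)
  have hγnot : (SPoly m g1 g2).coeff γ = 0 := by
    rw [hS, MvPolynomial.coeff_sub, hcA, hcB, sub_self]
  rw [MvPolynomial.mem_support_iff] at hd
  have hdγ : d ≠ γ := fun h => hd (h ▸ hγnot)
  have hcase : A.coeff d ≠ 0 ∨ B.coeff d ≠ 0 := by
    by_contra hc
    push_neg at hc
    rw [hS, MvPolynomial.coeff_sub, hc.1, hc.2, sub_self] at hd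
    exact hd rfl
  have key : ∀ (g : MvPolynomial σ F), g ≠ 0 → lmon m g ≤ γ →
      (monomial (γ - lmon m g) (g.coeff (lmon m g))⁻¹ * g).coeff d ≠ 0 →
      m.toSyn d < m.toSyn γ := by
    intro g hg hlg hc
    obtain ⟨b, hb, hdb⟩ := exists_of_coeff_monomial_mul_ne_zero hc
    have hble : m.toSyn b ≤ m.toSyn (lmon m g) := by
      rw [toSyn_lmon]; exact le_mdeg' hb
    have hle : m.toSyn d ≤ m.toSyn γ := by
      rw [hdb, map_add]
      calc m.toSyn (γ - lmon m g) + m.toSyn b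
          ≤ m.toSyn (γ - lmon m g) + m.toSyn (lmon m g) := by
            exact add_le_add_right hble _
        _ = m.toSyn γ := by rw [← map_add, tsub_add_cancel_of_le hlg]
    rcases lt_or_eq_of_le hle with h | h
    · exact h
    · exfalso
      -- equality forces b = lmon g hence d = γ
      have hbe : m.toSyn b = m.toSyn (lmon m g) := by
        by_contra hne
        have hblt : m.toSyn b < m.toSyn (lmon m g) := lt_of_le_of_ne hble hne
        have : m.toSyn d < m.toSyn γ := by
          rw [hdb, map_add]
          calc m.toSyn (γ - lmon m g) + m.toSyn b
              < m.toSyn (γ - lmon m g) + m.toSyn (lmon m g) := by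
                exact add_lt_add_right hblt _
            _ = m.toSyn γ := by rw [← map_add, tsub_add_cancel_of_le hlg]
        exact absurd h (ne_of_lt this)
      have : d = γ := by
        rw [hdb, m.toSyn.injective hbe, tsub_add_cancel_of_le hlg]
      exact hdγ this
  rcases hcase with h | h
  · exact key g1 h1 hl1 h
  · exact key g2 h2 hl2 h

lemma mdeg_spoly_lt {g1 g2 : MvPolynomial σ F} (h1 : g1 ≠ 0) (h2 : g2 ≠ 0)
    (hS : SPoly m g1 g2 ≠ 0) :
    mdeg m (SPoly m g1 g2) < m.toSyn (lmon m g1 ⊔ lmon m g2) := by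
  rw [← toSyn_lmon]
  exact spoly_support h1 h2 (lmon_mem_support hS)

lemma std_rep {G : Finset (MvPolynomial σ F)} {f : MvPolynomial σ F}
    (h : ReducesToZero m (↑G : Set (MvPolynomial σ F)) f) :
    ∃ q : MvPolynomial σ F → MvPolynomial σ F, f = ∑ g ∈ G, q g * g ∧
      ∀ g ∈ G, mdeg m (q g * g) ≤ mdeg m f := by
  classical
  induction h using Relation.ReflTransGen.head_induction_on with
  | refl =>
    refine ⟨0, by simp, ?_⟩
    intro g _
    simp
  | @head a c hstep htail ih =>
    obtain ⟨g, hgG, hg0, d, hdsup, hlg, hc⟩ := hstep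
    obtain ⟨q, hq1, hq2⟩ := ih
    set T : MvPolynomial σ F := monomial (d - lmon m g) (a.coeff d / g.coeff (lmon m g)) with hT
    have hgG' : g ∈ G := hgG
    have hdT : mdeg m (T * g) ≤ m.toSyn d := by
      calc mdeg m (T * g) ≤ mdeg m T + mdeg m g := mdeg_mul_le
        _ ≤ m.toSyn (d - lmon m g) + m.toSyn (lmon m g) := by
            refine add_le_add mdeg_monomial_le ?_
            rw [toSyn_lmon]
        _ = m.toSyn d := by rw [← map_add, tsub_add_cancel_of_le hlg]
    have hda : m.toSyn d ≤ mdeg m a := le_mdeg hdsup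
    have hca : mdeg m c ≤ mdeg m a := by
      rw [hc]
      refine le_trans mdeg_sub_le (max_le le_rfl (le_trans hdT hda))
    refine ⟨fun g' => q g' + if g' = g then T else 0, ?_, ?_⟩
    · have hsum : ∑ g' ∈ G, (q g' + if g' = g then T else 0) * g'
          = (∑ g' ∈ G, q g' * g') + ∑ g' ∈ G, (if g' = g then T * g' else 0) := by
        rw [← Finset.sum_add_distrib]
        congr 1
        funext g'
        rw [add_mul, ite_mul, zero_mul]
      rw [hsum, Finset.sum_ite_eq' G g (fun g' => T * g'), if_pos hgG', ← hq1, hc]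
      ring
    · intro g' hg'
      have : (q g' + if g' = g then T else 0) * g'
          = q g' * g' + (if g' = g then T * g' else 0) := by
        rw [add_mul, ite_mul, zero_mul]
      rw [this]
      refine le_trans mdeg_add_le (max_le (le_trans (hq2 g' hg') hca) ?_)
      by_cases h' : g' = g
      · rw [if_pos h', h']
        exact le_trans hdT hda
      · rw [if_neg h']
        rw [mdeg_zero]
        exact bot_le
end Chunk2
section Chunk3
variable {σ F : Type*} [Field F] {m : MonomialOrder σ}

lemma spoly_rep {G : Finset (MvPolynomial σ F)} {g1 g2 : MvPolynomial σ F}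
    (h1 : g1 ≠ 0) (h2 : g2 ≠ 0)
    (hred : ReducesToZero m (↑G : Set (MvPolynomial σ F)) (SPoly m g1 g2)) :
    ∃ q : MvPolynomial σ F → MvPolynomial σ F,
      SPoly m g1 g2 = ∑ g ∈ G, q g * g ∧
      ∀ g ∈ G, q g = 0 ∨ mdeg m (q g * g) < m.toSyn (lmon m g1 ⊔ lmon m g2) := by
  by_cases hS : SPoly m g1 g2 = 0
  · exact ⟨0, by simp [hS], fun g _ => Or.inl rfl⟩
  · obtain ⟨q, hq1, hq2⟩ := std_rep hred
    exact ⟨q, hq1, fun g hg =>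
      Or.inr (lt_of_le_of_lt (hq2 g hg) (mdeg_spoly_lt h1 h2 hS))⟩

open scoped Classical in
lemma core {G : Finset (MvPolynomial σ F)} (hG0 : ∀ g ∈ G, g ≠ 0)
    (hS : ∀ g ∈ G, ∀ h ∈ G, ReducesToZero m (↑G : Set (MvPolynomial σ F)) (SPoly m g h)) :
    ∀ δ : m.syn, ∀ n : ℕ, ∀ (f : MvPolynomial σ F) (h : MvPolynomial σ F → MvPolynomial σ F),
      f = ∑ g ∈ G, h g * g →
      (∀ g ∈ G, mdeg m (h g * g) ≤ δ) →
      (G.filter fun g => h g ≠ 0 ∧ mdeg m (h g * g) = δ).card ≤ n →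
      f ≠ 0 → ∃ g ∈ G, g ≠ 0 ∧ lmon m g ≤ lmon m f := by
  intro δ
  induction δ using WellFoundedLT.induction with
  | _ δ IHδ =>
  intro n
  induction n using Nat.strong_induction_on with
  | _ n IHn =>
  intro f h hrep hbd hcard hf0
  by_cases hcase : δ ≤ mdeg m f
  · -- Case A : the degree bound is attained by f itself
    have hex : ∃ g ∈ G, (h g * g).coeff (lmon m f) ≠ 0 := by
      by_contra hc
      push_neg at hc
      have he : ∀ L, f.coeff L = ∑ g ∈ G, (h g * g).coeff L := by
        intro L
        rw [hrep]
        exact MvPolynomial.coeff_sum G (fun g => h g * g) L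
      have : f.coeff (lmon m f) = 0 := by
        rw [he (lmon m f)]
        exact Finset.sum_eq_zero hc
      exact coeff_lmon hf0 this
    obtain ⟨g, hgG, hgne⟩ := hex
    have hg0 : g ≠ 0 := hG0 g hgG
    have hprod : h g * g ≠ 0 := fun hz => hgne (by rw [hz]; simp)
    have hhg : h g ≠ 0 := fun hz => hprod (by rw [hz, zero_mul])
    have e2 : mdeg m (h g * g) ≤ m.toSyn (lmon m f) := by
      rw [toSyn_lmon]
      exact le_trans (hbd g hgG) hcase
    have hlf : lmon m f = lmon m (h g * g) :=
      eq_lmon (MvPolynomial.mem_support_iff.2 hgne) e2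
    refine ⟨g, hgG, hg0, ?_⟩
    rw [hlf, lmon_mul hhg hg0]
    exact le_add_self
  · -- Case B : strict cancellation at level δ
    push_neg at hcase
    have hδpos : (0 : m.syn) < δ := lt_of_le_of_lt bot_le hcase
    set s := G.filter (fun g => h g ≠ 0 ∧ mdeg m (h g * g) = δ) with hsdef
    rcases s.eq_empty_or_nonempty with hse | hsne
    · -- no term attains δ : decrease δ
      have hlt : (G.sup fun g => mdeg m (h g * g)) < δ := by
        rw [Finset.sup_lt_iff hδpos]
        intro g hg
        rcases eq_or_ne (h g) 0 with h0 | h0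
        · rw [h0, zero_mul, mdeg_zero]; exact hδpos
        · refine lt_of_le_of_ne (hbd g hg) (fun he => ?_)
          have : g ∈ s := Finset.mem_filter.2 ⟨hg, h0, he⟩
          rw [hse] at this
          exact absurd this (Finset.notMem_empty g)
      exact IHδ _ hlt (G.filter fun g => h g ≠ 0 ∧
          mdeg m (h g * g) = G.sup fun g => mdeg m (h g * g)).card f h hrep
        (fun g hg => Finset.le_sup (f := fun g => mdeg m (h g * g)) hg) le_rfl hf0
    · -- s nonempty : coefficients at level δ cancel
      set E := m.toSyn.symm δ with hEdef
      have hEs : m.toSyn E = δ := m.toSyn.apply_symm_apply δ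
      have hfE : f.coeff E = 0 := coeff_eq_zero_of_mdeg_lt (by rw [hEs]; exact hcase)
      have hGsum : ∑ g ∈ G, (h g * g).coeff E = 0 := by
        rw [← MvPolynomial.coeff_sum, ← hrep, hfE]
      have hout : ∀ g ∈ G, g ∉ s → (h g * g).coeff E = 0 := by
        intro g hg hns
        rcases eq_or_ne (h g) 0 with h0 | h0
        · rw [h0, zero_mul, MvPolynomial.coeff_zero]
        · have hne : mdeg m (h g * g) ≠ δ := fun he =>
            hns (Finset.mem_filter.2 ⟨hg, h0, he⟩)
          exact coeff_eq_zero_of_mdeg_lt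
            (by rw [hEs]; exact lt_of_le_of_ne (hbd g hg) hne)
      have hsumE : ∑ g ∈ s, (h g * g).coeff E = 0 := by
        rw [← hGsum]
        exact Finset.sum_subset (Finset.filter_subset _ _)
          (fun g hg hns => hout g hg hns)
      -- facts about members of s
      have hkey : ∀ g ∈ s, h g ≠ 0 ∧ g ≠ 0 ∧ lmon m (h g) + lmon m g = E ∧
          (h g * g).coeff E ≠ 0 := by
        intro g hgs
        obtain ⟨hgG, hh0, hmd⟩ := Finset.mem_filter.1 hgs
        have hg0 : g ≠ 0 := hG0 g hgG
        have hlm : lmon m (h g * g) = E := by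
          apply m.toSyn.injective
          rw [toSyn_lmon, hmd, hEs]
        refine ⟨hh0, hg0, ?_, ?_⟩
        · rw [← lmon_mul hh0 hg0, hlm]
        · rw [← hlm]
          exact coeff_lmon (mul_ne_zero hh0 hg0)
      -- s has at least two elements
      have hcard2 : 1 < s.card := by
        rcases Nat.lt_or_ge s.card 2 with hlt2 | hge
        · exfalso
          interval_cases hc : s.card
          · exact absurd (Finset.card_eq_zero.1 hc) (Finset.nonempty_iff_ne_empty.1 hsne)
          · obtain ⟨g, hg⟩ := Finset.card_eq_one.1 hc
            rw [hg, Finset.sum_singleton] at hsumE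
            have := hkey g (by rw [hg]; exact Finset.mem_singleton_self g)
            exact this.2.2.2 hsumE
        · exact hge
      obtain ⟨g1, hg1s, g2, hg2s, hg12⟩ := Finset.one_lt_card.1 hcard2
      have hG1 : g1 ∈ G := Finset.filter_subset _ _ hg1s
      have hG2 : g2 ∈ G := Finset.filter_subset _ _ hg2s
      obtain ⟨hh1, hg1, hE1, -⟩ := hkey g1 hg1s
      obtain ⟨hh2, hg2, hE2, -⟩ := hkey g2 hg2s
      set l1 := lmon m g1 with hl1def
      set l2 := lmon m g2 with hl2def
      set t1 := lmon m (h g1) with ht1def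
      set t2 := lmon m (h g2) with ht2def
      set c1 := (h g1).coeff t1 with hc1def
      set lc1 := g1.coeff l1 with hlc1def
      set lc2 := g2.coeff l2 with hlc2def
      set γ := l1 ⊔ l2 with hγdef
      have hlc1 : lc1 ≠ 0 := coeff_lmon hg1
      have hlc2 : lc2 ≠ 0 := coeff_lmon hg2
      have hc1 : c1 ≠ 0 := coeff_lmon hh1
      have hγl1 : l1 ≤ γ := le_sup_left
      have hγl2 : l2 ≤ γ := le_sup_right
      have hγE : γ ≤ E := by
        refine sup_le ?_ ?_
        · rw [← hE1]; exact le_add_self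
        · rw [← hE2]; exact le_add_self
      set d2 := c1 * lc1 / lc2 with hd2def
      obtain ⟨q, hq1, hq2⟩ := spoly_rep hg1 hg2 (hS g1 hG1 g2 hG2)
      -- arithmetic of exponents
      have ha1 : (E - γ) + (γ - l1) = t1 := by
        ext a
        have k1 := Finsupp.le_def.1 hγl1 a
        have k2 := Finsupp.le_def.1 hγE a
        have k3 : t1 a + l1 a = E a := by
          have := DFunLike.congr_fun hE1 a
          simpa [Finsupp.add_apply] using this
        simp only [Finsupp.add_apply, Finsupp.tsub_apply]
        omega
      have ha2 : (E - γ) + (γ - l2) = t2 := by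
        ext a
        have k1 := Finsupp.le_def.1 hγl2 a
        have k2 := Finsupp.le_def.1 hγE a
        have k3 : t2 a + l2 a = E a := by
          have := DFunLike.congr_fun hE2 a
          simpa [Finsupp.add_apply] using this
        simp only [Finsupp.add_apply, Finsupp.tsub_apply]
        omega
      have hEγ : (E - γ) + γ = E := tsub_add_cancel_of_le hγE
      -- the S-polynomial identity
      have hSP : SPoly m g1 g2 =
          monomial (γ - l1) lc1⁻¹ * g1 - monomial (γ - l2) lc2⁻¹ * g2 := rfl
      have hid : (C (c1 * lc1) * monomial (E - γ) 1) * SPoly m g1 g2 =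
          monomial t1 c1 * g1 - monomial t2 d2 * g2 := by
        rw [hSP, mul_sub, mul_assoc, mul_assoc, ← mul_assoc (monomial (E - γ) (1:F)),
          ← mul_assoc (monomial (E - γ) (1:F)), monomial_mul, monomial_mul,
          one_mul, one_mul, ha1, ha2, ← mul_assoc, ← mul_assoc,
          C_mul_monomial, C_mul_monomial, mul_inv_cancel_right₀ hlc1,
          hd2def, div_eq_mul_inv]
      -- the new representation
      set P : MvPolynomial σ F := C (c1 * lc1) * monomial (E - γ) 1 with hPdef
      set h' : MvPolynomial σ F → MvPolynomial σ F := fun g =>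
        h g + (if g = g1 then -(monomial t1 c1) else 0) +
          (if g = g2 then monomial t2 d2 else 0) + P * q g with hh'def
      have hexpand : ∀ g, h' g * g = h g * g +
          ((if g = g1 then (-(monomial t1 c1)) * g else 0) +
           ((if g = g2 then monomial t2 d2 * g else 0) + P * (q g * g))) := by
        intro g
        rw [hh'def]
        simp only
        split_ifs <;> ring
      have hrep' : f = ∑ g ∈ G, h' g * g := by
        rw [Finset.sum_congr rfl (fun g _ => hexpand g), Finset.sum_add_distrib,
          Finset.sum_add_distrib, Finset.sum_add_distrib,
          Finset.sum_ite_eq' G g1 (fun g => (-(monomial t1 c1)) * g),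
          Finset.sum_ite_eq' G g2 (fun g => monomial t2 d2 * g),
          if_pos hG1, if_pos hG2, ← Finset.mul_sum, ← hq1, ← hrep, hid]
        ring
      -- degree bounds for the pieces
      have hPlt : ∀ g ∈ G, mdeg m (P * (q g * g)) < δ := by
        intro g hg
        rcases hq2 g hg with h0 | hlt
        · rw [h0, zero_mul, mul_zero, mdeg_zero]; exact hδpos
        · have hP : mdeg m P ≤ m.toSyn (E - γ) := by
            rw [hPdef, C_mul_monomial, mul_one]
            exact mdeg_monomial_le
          calc mdeg m (P * (q g * g)) ≤ mdeg m P + mdeg m (q g * g) := mdeg_mul_le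
            _ ≤ m.toSyn (E - γ) + mdeg m (q g * g) := add_le_add_left hP _
            _ < m.toSyn (E - γ) + m.toSyn γ := add_lt_add_right hlt _
            _ = δ := by rw [← map_add, hEγ, hEs]
      have hbase1 : mdeg m ((h g1 - monomial t1 c1) * g1) < δ := by
        set b1 := h g1 - monomial t1 c1 with hb1def
        rcases eq_or_ne b1 0 with h0 | h0
        · rw [h0, zero_mul, mdeg_zero]; exact hδpos
        · have hsup : ∀ d ∈ b1.support, m.toSyn d < m.toSyn t1 := by
            intro d hd
            rw [MvPolynomial.mem_support_iff, hb1def, MvPolynomial.coeff_sub] at hd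
            have hdt1 : d ≠ t1 := by
              intro he
              rw [he, MvPolynomial.coeff_monomial, if_pos rfl, ← hc1def, sub_self] at hd
              exact hd rfl
            have hch : (h g1).coeff d ≠ 0 := by
              intro hz
              rw [hz, MvPolynomial.coeff_monomial, if_neg (Ne.symm hdt1), sub_zero] at hd
              exact hd rfl
            have : m.toSyn d ≤ m.toSyn t1 := by
              rw [ht1def, toSyn_lmon]
              exact le_mdeg' hch
            exact lt_of_le_of_ne this (fun he => hdt1 (m.toSyn.injective he))
          have hmb1 : mdeg m b1 < m.toSyn t1 := by
            rw [← toSyn_lmon]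
            exact hsup _ (lmon_mem_support h0)
          calc mdeg m (b1 * g1) ≤ mdeg m b1 + mdeg m g1 := mdeg_mul_le
            _ < m.toSyn t1 + mdeg m g1 := add_lt_add_left hmb1 _
            _ = δ := by rw [← toSyn_lmon, ← hl1def, ← map_add, hE1, hEs]
      have hbase2 : mdeg m ((h g2 + monomial t2 d2) * g2) ≤ δ := by
        have hmb2 : mdeg m (h g2 + monomial t2 d2) ≤ m.toSyn t2 := by
          refine le_trans mdeg_add_le (max_le ?_ mdeg_monomial_le)
          rw [ht2def, toSyn_lmon]
        calc mdeg m ((h g2 + monomial t2 d2) * g2)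
            ≤ mdeg m (h g2 + monomial t2 d2) + mdeg m g2 := mdeg_mul_le
          _ ≤ m.toSyn t2 + mdeg m g2 := add_le_add_left hmb2 _
          _ = δ := by rw [← toSyn_lmon, ← hl2def, ← map_add, hE2, hEs]
      -- rewrite h' g * g in the three cases
      have hg1form : h' g1 * g1 = (h g1 - monomial t1 c1) * g1 + P * (q g1 * g1) := by
        rw [hh'def]
        beta_reduce
        rw [if_pos rfl, if_neg hg12]
        ring
      have hg2form : h' g2 * g2 = (h g2 + monomial t2 d2) * g2 + P * (q g2 * g2) := by
        rw [hh'def]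
        beta_reduce
        rw [if_neg (Ne.symm hg12), if_pos rfl]
        ring
      have hgform : ∀ g, g ≠ g1 → g ≠ g2 → h' g * g = h g * g + P * (q g * g) := by
        intro g hne1 hne2
        rw [hh'def]
        beta_reduce
        rw [if_neg hne1, if_neg hne2]
        ring
      have hbd' : ∀ g ∈ G, mdeg m (h' g * g) ≤ δ := by
        intro g hg
        rcases eq_or_ne g g1 with rfl | hne1
        · rw [hg1form]
          exact le_trans mdeg_add_le (max_le (le_of_lt hbase1) (le_of_lt (hPlt _ hg)))
        rcases eq_or_ne g g2 with rfl | hne2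
        · rw [hg2form]
          exact le_trans mdeg_add_le (max_le hbase2 (le_of_lt (hPlt _ hg)))
        · rw [hgform g hne1 hne2]
          exact le_trans mdeg_add_le (max_le (hbd g hg) (le_of_lt (hPlt _ hg)))
      have hlt' : ∀ g ∈ G, g ∉ s.erase g1 → mdeg m (h' g * g) < δ := by
        intro g hg hns
        rcases eq_or_ne g g1 with rfl | hne1
        · rw [hg1form]
          exact lt_of_le_of_lt mdeg_add_le (max_lt hbase1 (hPlt _ hg))
        · have hgs : g ∉ s := fun hgs => hns (Finset.mem_erase.2 ⟨hne1, hgs⟩)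
          have hsm : mdeg m (h g * g) < δ := by
            rcases eq_or_ne (h g) 0 with h0 | h0
            · rw [h0, zero_mul, mdeg_zero]; exact hδpos
            · exact lt_of_le_of_ne (hbd g hg)
                (fun he => hgs (Finset.mem_filter.2 ⟨hg, h0, he⟩))
          rcases eq_or_ne g g2 with rfl | hne2
          · exact absurd hg2s hgs
          · rw [hgform g hne1 hne2]
            exact lt_of_le_of_lt mdeg_add_le (max_lt hsm (hPlt _ hg))
      have hsub : (G.filter fun g => h' g ≠ 0 ∧ mdeg m (h' g * g) = δ) ⊆ s.erase g1 := by
        intro g hg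
        obtain ⟨hgG, -, hmd⟩ := Finset.mem_filter.1 hg
        by_contra hns
        exact absurd hmd (ne_of_lt (hlt' g hgG hns))
      have hcard' : (G.filter fun g => h' g ≠ 0 ∧ mdeg m (h' g * g) = δ).card ≤ s.card - 1 := by
        refine le_trans (Finset.card_le_card hsub) ?_
        rw [Finset.card_erase_of_mem hg1s]
      have hscard : s.card ≤ n := hcard
      exact IHn (s.card - 1) (by omega) f h' hrep' hbd' hcard' hf0
end Chunk3

theorem stmt11 {σ F : Type*} [Field F] (m : MonomialOrder σ)
    (G : Finset (MvPolynomial σ F)) (hG0 : ∀ g ∈ G, g ≠ 0)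
    (hS : ∀ g ∈ G, ∀ h ∈ G, ReducesToZero m (G : Set (MvPolynomial σ F)) (SPoly m g h)) :
    IsGroebner m (G : Set (MvPolynomial σ F)) (Ideal.span (G : Set (MvPolynomial σ F))) := by
  classical
  constructor
  · exact fun g hg => Ideal.subset_span hg
  · intro f hfI hf0
    obtain ⟨h, -, hrep⟩ := Submodule.mem_span_finset.1 hfI
    have hrep' : f = ∑ g ∈ G, h g * g := by
      rw [← hrep]
      exact Finset.sum_congr rfl (fun g _ => (smul_eq_mul _ _).symm)
    obtain ⟨g, hgG, hg0, hle⟩ := core hG0 hS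
      (G.sup fun g => mdeg m (h g * g))
      (G.filter fun g => h g ≠ 0 ∧
        mdeg m (h g * g) = G.sup fun g => mdeg m (h g * g)).card
      f h hrep'
      (fun g hg => Finset.le_sup (f := fun g => mdeg m (h g * g)) hg)
      le_rfl hf0
    exact ⟨g, Finset.mem_coe.2 hgG, hg0, hle⟩
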